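/- arXiv:1502.02268 — 5 statements merged into one kernel-verified Lean document; each statement's English description precedes it below -/
import Mathlib

section
/- Let f : ℝ^n → ℝ be differentiable with smoothness matrix M ≻ 0 and strong convexity matrix G ≻ 0. Let Ŝ be a proper nonvacuous random subset of [n], p_i = Prob(i ∈ Ŝ). For fixed x, define the random point x⁺ = x + I_Ŝ h̃ with h̃ = −(E[M_Ŝ])^{-1} D(p) ∇f(x). Then E[f(x⁺)] − f(x*) ≤ (1 − σ₂)(f(x) − f(x*)) where σ₂ = λ_min(G^{1/2} D(p) (E[M_Ŝ])^{-1} D(p) G^{1/2}). -/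
open Matrix BigOperators Finset

noncomputable section

/-- The diagonal 0/1 projection matrix `I_S`. -/
def projMat (n : ℕ) (S : Finset (Fin n)) : Matrix (Fin n) (Fin n) ℝ :=
  Matrix.diagonal (fun i => if i ∈ S then (1 : ℝ) else 0)

/-- `M_S = I_S M I_S`. -/
def restr {n : ℕ} (M : Matrix (Fin n) (Fin n) ℝ) (S : Finset (Fin n)) :
    Matrix (Fin n) (Fin n) ℝ :=
  projMat n S * M * projMat n S

/-- Expectation of a matrix-valued function of the random set. -/
def mExp {n : ℕ} (P : Finset (Fin n) → ℝ)
    (f : Finset (Fin n) → Matrix (Fin n) (Fin n) ℝ) : Matrix (Fin n) (Fin n) ℝ :=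
  ∑ S : Finset (Fin n), P S • f S

/-- Inclusion probability `p_i = Prob(i ∈ Ŝ)`. -/
def prob {n : ℕ} (P : Finset (Fin n) → ℝ) (i : Fin n) : ℝ :=
  ∑ S : Finset (Fin n), if i ∈ S then P S else 0

/-- `P` is a probability distribution over subsets of `[n]`. -/
def IsSampling {n : ℕ} (P : Finset (Fin n) → ℝ) : Prop :=
  (∀ S, 0 ≤ P S) ∧ ∑ S : Finset (Fin n), P S = 1

/-- Smallest real eigenvalue. -/
def lamMin {n : ℕ} (A : Matrix (Fin n) (Fin n) ℝ) : ℝ :=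
  sInf {r : ℝ | ∃ x : Fin n → ℝ, x ≠ 0 ∧ A.mulVec x = r • x}

/-- Largest real eigenvalue. -/
def lamMax {n : ℕ} (A : Matrix (Fin n) (Fin n) ℝ) : ℝ :=
  sSup {r : ℝ | ∃ x : Fin n → ℝ, x ≠ 0 ∧ A.mulVec x = r • x}

/-- The positive semidefinite square root `Matrix.PosSemidef.sqrt` as defined in the older Mathlib. -/
def psdSqrt {n : ℕ} {A : Matrix (Fin n) (Fin n) ℝ} (hA : A.PosSemidef) : Matrix (Fin n) (Fin n) ℝ :=
  (hA.1.eigenvectorUnitary : Matrix (Fin n) (Fin n) ℝ) *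
    Matrix.diagonal ((↑) ∘ (Real.sqrt ·) ∘ hA.1.eigenvalues) *
    (star (hA.1.eigenvectorUnitary : Matrix (Fin n) (Fin n) ℝ))


namespace StmtFive

variable {n : ℕ}

lemma psdSqrt_herm {A : Matrix (Fin n) (Fin n) ℝ} (hA : A.PosSemidef) :
    (psdSqrt hA).IsHermitian := by
  unfold psdSqrt
  rw [Matrix.star_eq_conjTranspose]
  exact Matrix.isHermitian_mul_mul_conjTranspose _ (Matrix.isHermitian_diagonal _)

lemma psdSqrt_mul_self {A : Matrix (Fin n) (Fin n) ℝ} (hA : A.PosSemidef) :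
    psdSqrt hA * psdSqrt hA = A := by
  have hU : star (hA.1.eigenvectorUnitary : Matrix (Fin n) (Fin n) ℝ) *
      (hA.1.eigenvectorUnitary : Matrix (Fin n) (Fin n) ℝ) = 1 := Unitary.coe_star_mul_self _
  unfold psdSqrt
  conv_rhs => rw [hA.1.spectral_theorem, Unitary.conjStarAlgAut_apply]
  simp only [Matrix.mul_assoc]
  rw [← Matrix.mul_assoc (star _) _ (Matrix.diagonal _ * _), hU, Matrix.one_mul,
    ← Matrix.mul_assoc (Matrix.diagonal _) (Matrix.diagonal _), Matrix.diagonal_mul_diagonal]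
  congr 3
  funext i
  simp [Real.mul_self_sqrt (hA.eigenvalues_nonneg i)]

lemma herm_transpose {A : Matrix (Fin n) (Fin n) ℝ} (hA : A.IsHermitian) : Aᵀ = A := by
  rw [← Matrix.conjTranspose_eq_transpose_of_trivial]; exact hA

lemma dot_symm {A : Matrix (Fin n) (Fin n) ℝ} (hA : A.IsHermitian) (u v : Fin n → ℝ) :
    u ⬝ᵥ A.mulVec v = A.mulVec u ⬝ᵥ v := by
  rw [Matrix.dotProduct_mulVec, ← Matrix.mulVec_transpose, herm_transpose hA]

lemma dot_self_pos {x : Fin n → ℝ} (hx : x ≠ 0) : 0 < x ⬝ᵥ x := by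
  have h0 : 0 ≤ x ⬝ᵥ x := Finset.sum_nonneg fun i _ => mul_self_nonneg _
  rcases h0.lt_or_eq with h | h
  · exact h
  · exfalso; apply hx; funext i
    have := Finset.sum_eq_zero_iff_of_nonneg
      (fun i (_ : i ∈ univ) => mul_self_nonneg (x i)) |>.mp h.symm i (mem_univ i)
    exact mul_self_eq_zero.mp this

lemma psd_quad {A : Matrix (Fin n) (Fin n) ℝ} (hA : A.PosSemidef) (x : Fin n → ℝ) :
    0 ≤ x ⬝ᵥ A.mulVec x := by
  have := hA.dotProduct_mulVec_nonneg x
  simpa using this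

lemma pd_quad {A : Matrix (Fin n) (Fin n) ℝ} (hA : A.PosDef) {x : Fin n → ℝ} (hx : x ≠ 0) :
    0 < x ⬝ᵥ A.mulVec x := by
  have := hA.dotProduct_mulVec_pos hx
  simpa using this

lemma quad_ge [NeZero n] {A : Matrix (Fin n) (Fin n) ℝ} (hA : A.IsHermitian) (x : Fin n → ℝ) :
    (Finset.univ.inf' ⟨0, mem_univ 0⟩ hA.eigenvalues) * (x ⬝ᵥ x) ≤ x ⬝ᵥ A.mulVec x := by
  classical
  set b := hA.eigenvectorBasis with hb
  set m := Finset.univ.inf' ⟨0, mem_univ 0⟩ hA.eigenvalues with hm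
  let X : EuclideanSpace ℝ (Fin n) := WithLp.toLp 2 x
  let AX : EuclideanSpace ℝ (Fin n) := WithLp.toLp 2 (A.mulVec x)
  have hinner : ∀ u v : EuclideanSpace ℝ (Fin n), inner ℝ u v = (u : Fin n → ℝ) ⬝ᵥ v := by
    intro u v
    simp [EuclideanSpace.inner_eq_star_dotProduct, dotProduct, mul_comm]
  have key : ∀ i, (inner ℝ (b i) AX : ℝ) = hA.eigenvalues i * inner ℝ (b i) X := by
    intro i
    rw [hinner, hinner]
    show (b i : Fin n → ℝ) ⬝ᵥ A.mulVec x = _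
    have h2 : A *ᵥ (b i : Fin n → ℝ) = hA.eigenvalues i • (b i : Fin n → ℝ) :=
      hA.mulVec_eigenvectorBasis i
    rw [dot_symm hA, h2, smul_dotProduct]
    rfl
  have e1 : x ⬝ᵥ A.mulVec x = ∑ i, hA.eigenvalues i * (inner ℝ (b i) X : ℝ) ^ 2 := by
    have := b.sum_inner_mul_inner X AX
    rw [hinner] at this
    rw [show x ⬝ᵥ A.mulVec x = (X : Fin n → ℝ) ⬝ᵥ AX from rfl, ← this]
    refine Finset.sum_congr rfl fun i _ => ?_
    rw [key i, real_inner_comm X (b i)]; ring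
  have e2 : x ⬝ᵥ x = ∑ i, (inner ℝ (b i) X : ℝ) ^ 2 := by
    have := b.sum_inner_mul_inner X X
    rw [hinner] at this
    rw [show x ⬝ᵥ x = (X : Fin n → ℝ) ⬝ᵥ X from rfl, ← this]
    refine Finset.sum_congr rfl fun i _ => ?_
    rw [real_inner_comm X (b i)]; ring
  rw [e1, e2, Finset.mul_sum]
  refine Finset.sum_le_sum fun i _ => ?_
  exact mul_le_mul_of_nonneg_right (Finset.inf'_le _ (mem_univ i)) (sq_nonneg _)

section EigenBounds
variable [NeZero n] {A : Matrix (Fin n) (Fin n) ℝ}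

lemma eigSet_nonempty (hA : A.IsHermitian) :
    {r : ℝ | ∃ x : Fin n → ℝ, x ≠ 0 ∧ A.mulVec x = r • x}.Nonempty := by
  refine ⟨hA.eigenvalues 0, (hA.eigenvectorBasis 0 : Fin n → ℝ), ?_, hA.mulVec_eigenvectorBasis 0⟩
  exact fun h => hA.eigenvectorBasis.orthonormal.ne_zero 0 (by ext i; exact congrFun h i)

lemma eigSet_bdd (hA : A.IsHermitian) :
    BddBelow {r : ℝ | ∃ x : Fin n → ℝ, x ≠ 0 ∧ A.mulVec x = r • x} := by
  refine ⟨Finset.univ.inf' ⟨0, mem_univ 0⟩ hA.eigenvalues, fun r hr => ?_⟩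
  obtain ⟨x, hx, hAx⟩ := hr
  have h1 := quad_ge hA x
  rw [hAx] at h1
  have h2 : x ⬝ᵥ r • x = r * (x ⬝ᵥ x) := by simp [dotProduct_smul, smul_eq_mul]
  rw [h2] at h1
  exact le_of_mul_le_mul_right h1 (dot_self_pos hx)

lemma lamMin_quad (hA : A.IsHermitian) (x : Fin n → ℝ) :
    lamMin A * (x ⬝ᵥ x) ≤ x ⬝ᵥ A.mulVec x := by
  obtain ⟨i0, hi0⟩ := Finset.exists_mem_eq_inf'
    (⟨0, mem_univ 0⟩ : (univ : Finset (Fin n)).Nonempty) hA.eigenvalues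
  have hmem : Finset.univ.inf' ⟨0, mem_univ 0⟩ hA.eigenvalues ∈
      {r : ℝ | ∃ x : Fin n → ℝ, x ≠ 0 ∧ A.mulVec x = r • x} := by
    rw [hi0.2]
    refine ⟨(hA.eigenvectorBasis i0 : Fin n → ℝ), ?_, hA.mulVec_eigenvectorBasis i0⟩
    exact fun h => hA.eigenvectorBasis.orthonormal.ne_zero i0 (by ext i; exact congrFun h i)
  have hle : lamMin A ≤ Finset.univ.inf' ⟨0, mem_univ 0⟩ hA.eigenvalues :=
    csInf_le (eigSet_bdd hA) hmem
  have hxx : 0 ≤ x ⬝ᵥ x := Finset.sum_nonneg fun i _ => mul_self_nonneg _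
  calc lamMin A * (x ⬝ᵥ x) ≤ (Finset.univ.inf' ⟨0, mem_univ 0⟩ hA.eigenvalues) * (x ⬝ᵥ x) :=
        mul_le_mul_of_nonneg_right hle hxx
    _ ≤ x ⬝ᵥ A.mulVec x := quad_ge hA x

lemma lamMin_nonneg (hA : A.PosSemidef) : 0 ≤ lamMin A :=
  le_csInf (eigSet_nonempty hA.1) (by
    rintro r ⟨x, hx, hAx⟩
    have h1 := psd_quad hA x
    rw [hAx] at h1
    have h2 : x ⬝ᵥ r • x = r * (x ⬝ᵥ x) := by simp [dotProduct_smul, smul_eq_mul]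
    rw [h2] at h1
    exact (mul_nonneg_iff_of_pos_right (dot_self_pos hx)).mp h1)

end EigenBounds

lemma diag_dot (d : Fin n → ℝ) (u v : Fin n → ℝ) :
    (Matrix.diagonal d).mulVec u ⬝ᵥ v = u ⬝ᵥ (Matrix.diagonal d).mulVec v := by
  simp only [dotProduct, Matrix.mulVec_diagonal]
  exact Finset.sum_congr rfl fun i _ => by ring

lemma sum_smul_mulVec (c : Finset (Fin n) → ℝ)
    (F : Finset (Fin n) → Matrix (Fin n) (Fin n) ℝ) (v : Fin n → ℝ) :
    (∑ S : Finset (Fin n), c S • F S).mulVec v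
      = ∑ S : Finset (Fin n), c S • (F S).mulVec v := by
  funext i
  simp only [Matrix.mulVec, dotProduct, Finset.sum_apply, Matrix.sum_apply,
    Matrix.smul_apply, Finset.sum_mul, Pi.smul_apply, smul_eq_mul, Finset.mul_sum]
  rw [Finset.sum_comm]
  exact Finset.sum_congr rfl fun S _ => Finset.sum_congr rfl fun j _ => by ring

lemma sum_dot (u : Finset (Fin n) → (Fin n → ℝ)) (v : Fin n → ℝ) :
    (∑ S : Finset (Fin n), u S) ⬝ᵥ v = ∑ S : Finset (Fin n), u S ⬝ᵥ v := by
  simp only [dotProduct, Finset.sum_apply, Finset.sum_mul]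
  exact Finset.sum_comm

end StmtFive

open StmtFive

theorem stmt_5 {n : ℕ} (f : (Fin n → ℝ) → ℝ) (g : (Fin n → ℝ) → Fin n → ℝ)
    (hdiff : Differentiable ℝ f)
    (hgrad : ∀ x h : Fin n → ℝ, fderiv ℝ f x h = g x ⬝ᵥ h)
    (M G : Matrix (Fin n) (Fin n) ℝ) (hM : M.PosDef) (hG : G.PosDef)
    (hsmooth : ∀ x h : Fin n → ℝ,
      f (x + h) ≤ f x + g x ⬝ᵥ h + (1/2) * (M.mulVec h ⬝ᵥ h))
    (hsc : ∀ x h : Fin n → ℝ,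
      f x + g x ⬝ᵥ h + (1/2) * (G.mulVec h ⬝ᵥ h) ≤ f (x + h))
    (P : Finset (Fin n) → ℝ) (hP : IsSampling P)
    (hproper : ∀ i : Fin n, 0 < prob P i) (hnonvac : P ∅ = 0)
    (xs : Fin n → ℝ) (hxs : ∀ y, f xs ≤ f y) (x : Fin n → ℝ) :
    (∑ S : Finset (Fin n), P S * f (x + (projMat n S).mulVec
        (-(mExp P (restr M))⁻¹.mulVec ((Matrix.diagonal (prob P)).mulVec (g x))))) - f xs ≤
      (1 - lamMin (psdSqrt hG.posSemidef * Matrix.diagonal (prob P) * (mExp P (restr M))⁻¹ *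
        Matrix.diagonal (prob P) * psdSqrt hG.posSemidef)) * (f x - f xs) := by
  classical
  have hn : NeZero n := by
    constructor
    intro h0
    subst h0
    have h1 := hP.2
    have h2 : ∀ S : Finset (Fin 0), S = ∅ := fun S => Subsingleton.elim _ _
    rw [Fintype.sum_eq_single ∅ (fun S hS => ((hS (h2 S)).elim : P S = 0))] at h1
    rw [hnonvac] at h1; exact zero_ne_one h1
  set gx := g x with hgx
  set Dp := Matrix.diagonal (prob P) with hDp
  set W := mExp P (restr M) with hW
  set Sq := psdSqrt hG.posSemidef with hSq
  set hv := -(W⁻¹.mulVec (Dp.mulVec gx)) with hhv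
  set Q := Dp.mulVec gx ⬝ᵥ W⁻¹.mulVec (Dp.mulVec gx) with hQ
  have hMh : M.IsHermitian := hM.isHermitian
  have hGh : G.IsHermitian := hG.isHermitian
  have hSqh : Sq.IsHermitian := psdSqrt_herm hG.posSemidef
  have hDph : Dp.IsHermitian := Matrix.isHermitian_diagonal _
  have hprojh : ∀ S : Finset (Fin n), (projMat n S).IsHermitian :=
    fun S => Matrix.isHermitian_diagonal _
  have hrestrh : ∀ S : Finset (Fin n), (restr M S).IsHermitian := by
    intro S
    have h := Matrix.isHermitian_conjTranspose_mul_mul (projMat n S) hMh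
    rwa [(hprojh S).eq] at h
  have hWh : W.IsHermitian := by
    show Wᴴ = W
    rw [hW]; unfold mExp
    rw [Matrix.conjTranspose_sum]
    refine Finset.sum_congr rfl fun S _ => ?_
    rw [Matrix.conjTranspose_smul, (hrestrh S).eq, star_trivial]
  -- quadratic form of restr
  have hrq : ∀ (S : Finset (Fin n)) (v : Fin n → ℝ),
      (restr M S).mulVec v ⬝ᵥ v
        = M.mulVec ((projMat n S).mulVec v) ⬝ᵥ (projMat n S).mulVec v := by
    intro S v
    have h1 : (restr M S).mulVec v
        = (projMat n S).mulVec (M.mulVec ((projMat n S).mulVec v)) := by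
      rw [Matrix.mulVec_mulVec, Matrix.mulVec_mulVec]
      rfl
    rw [h1]
    exact diag_dot _ _ _
  -- quadratic form of W
  have hWq : ∀ v : Fin n → ℝ, W.mulVec v ⬝ᵥ v
      = ∑ S : Finset (Fin n), P S * ((restr M S).mulVec v ⬝ᵥ v) := by
    intro v
    rw [hW]; unfold mExp
    rw [sum_smul_mulVec, sum_dot]
    exact Finset.sum_congr rfl fun S _ => smul_dotProduct _ _ _
  have hWpos : W.PosDef := by
    refine Matrix.PosDef.of_dotProduct_mulVec_pos hWh fun v hv0 => ?_
    have hgoal : 0 < W.mulVec v ⬝ᵥ v := by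
      rw [hWq v]
      obtain ⟨i, hi⟩ := Function.ne_iff.mp hv0
      have hex : ∃ S : Finset (Fin n), (if i ∈ S then P S else 0) ≠ 0 := by
        by_contra hc
        push_neg at hc
        have : prob P i = 0 := Finset.sum_eq_zero fun S _ => hc S
        exact (hproper i).ne' this
      obtain ⟨S0, hS0⟩ := hex
      have hiS0 : i ∈ S0 := by by_contra h; simp [h] at hS0
      have hPS0 : 0 < P S0 := lt_of_le_of_ne (hP.1 S0) (by simpa [hiS0] using hS0.symm)
      refine Finset.sum_pos' (fun S _ => ?_) ⟨S0, mem_univ _, ?_⟩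
      · apply mul_nonneg (hP.1 S)
        rw [hrq]
        rw [dotProduct_comm]
        exact psd_quad hM.posSemidef _
      · apply mul_pos hPS0
        rw [hrq, dotProduct_comm]
        apply pd_quad hM
        intro hz
        apply hi
        have := congrFun hz i
        simpa [Matrix.mulVec_diagonal, projMat, hiS0] using this
    have : (0 : ℝ) < v ⬝ᵥ W.mulVec v := by rwa [dotProduct_comm]
    simpa using this
  have hWdet : IsUnit W.det := (Matrix.isUnit_iff_isUnit_det W).mp hWpos.isUnit
  have hWinv1 : W * W⁻¹ = 1 := Matrix.mul_nonsing_inv W hWdet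
  have hWhv : W.mulVec hv = -(Dp.mulVec gx) := by
    rw [hhv, Matrix.mulVec_neg, Matrix.mulVec_mulVec, hWinv1, Matrix.one_mulVec]
  -- step 1 : expectation bound
  have step1 : (∑ S : Finset (Fin n), P S * f (x + (projMat n S).mulVec hv))
      ≤ f x - (1/2) * Q := by
    have hb : ∀ S : Finset (Fin n), P S * f (x + (projMat n S).mulVec hv)
        ≤ P S * (f x + gx ⬝ᵥ (projMat n S).mulVec hv
            + (1/2) * (M.mulVec ((projMat n S).mulVec hv) ⬝ᵥ (projMat n S).mulVec hv)) :=
      fun S => mul_le_mul_of_nonneg_left (hsmooth x _) (hP.1 S)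
    refine le_trans (Finset.sum_le_sum fun S _ => hb S) (le_of_eq ?_)
    have T1 : ∑ S : Finset (Fin n), P S * f x = f x := by
      rw [← Finset.sum_mul, hP.2, one_mul]
    have T2 : ∑ S : Finset (Fin n), P S * (gx ⬝ᵥ (projMat n S).mulVec hv)
        = gx ⬝ᵥ Dp.mulVec hv := by
      have hin : ∀ i : Fin n,
          ∑ S : Finset (Fin n), P S * (gx i * ((if i ∈ S then (1:ℝ) else 0) * hv i))
            = gx i * (prob P i * hv i) := by
        intro i
        simp only [prob, Finset.sum_mul, Finset.mul_sum]
        refine Finset.sum_congr rfl fun S _ => ?_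
        split_ifs <;> ring
      calc ∑ S : Finset (Fin n), P S * (gx ⬝ᵥ (projMat n S).mulVec hv)
          = ∑ S : Finset (Fin n), ∑ i,
              P S * (gx i * ((if i ∈ S then (1:ℝ) else 0) * hv i)) := by
            refine Finset.sum_congr rfl fun S _ => ?_
            rw [show (gx ⬝ᵥ (projMat n S).mulVec hv)
                = ∑ i, gx i * ((if i ∈ S then (1:ℝ) else 0) * hv i) from
              Finset.sum_congr rfl fun i _ => by
                rw [show (projMat n S).mulVec hv i
                  = (if i ∈ S then (1:ℝ) else 0) * hv i from Matrix.mulVec_diagonal _ _ _]]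
            rw [Finset.mul_sum]
        _ = ∑ i, ∑ S : Finset (Fin n),
              P S * (gx i * ((if i ∈ S then (1:ℝ) else 0) * hv i)) := Finset.sum_comm
        _ = ∑ i, gx i * (prob P i * hv i) := Finset.sum_congr rfl fun i _ => hin i
        _ = gx ⬝ᵥ Dp.mulVec hv := by
            refine Finset.sum_congr rfl fun i _ => ?_
            rw [hDp, show (Matrix.diagonal (prob P)).mulVec hv i
              = prob P i * hv i from Matrix.mulVec_diagonal _ _ _]
    have T3 : ∑ S : Finset (Fin n),
        P S * (M.mulVec ((projMat n S).mulVec hv) ⬝ᵥ (projMat n S).mulVec hv)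
          = W.mulVec hv ⬝ᵥ hv := by
      rw [hWq]
      exact Finset.sum_congr rfl fun S _ => by rw [hrq]
    have hT3' : W.mulVec hv ⬝ᵥ hv = Q := by
      rw [hWhv, hhv, hQ, neg_dotProduct, dotProduct_neg, neg_neg]
    have hT2' : gx ⬝ᵥ Dp.mulVec hv = -Q := by
      rw [← diag_dot, hhv, hQ, dotProduct_neg]
    calc ∑ S : Finset (Fin n), P S * (f x + gx ⬝ᵥ (projMat n S).mulVec hv
            + (1/2) * (M.mulVec ((projMat n S).mulVec hv) ⬝ᵥ (projMat n S).mulVec hv))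
        = (∑ S : Finset (Fin n), P S * f x)
          + (∑ S : Finset (Fin n), P S * (gx ⬝ᵥ (projMat n S).mulVec hv))
          + (1/2) * ∑ S : Finset (Fin n),
              P S * (M.mulVec ((projMat n S).mulVec hv) ⬝ᵥ (projMat n S).mulVec hv) := by
          rw [Finset.mul_sum, ← Finset.sum_add_distrib, ← Finset.sum_add_distrib]
          exact Finset.sum_congr rfl fun S _ => by ring
      _ = f x - (1/2) * Q := by rw [T1, T2, T3, hT2', hT3']; ring
  -- step 2 : strong convexity bound
  have hGdet : IsUnit G.det := (Matrix.isUnit_iff_isUnit_det G).mp hG.isUnit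
  have hGinv1 : G * G⁻¹ = 1 := Matrix.mul_nonsing_inv G hGdet
  have step2 : f x - f xs ≤ (1/2) * (gx ⬝ᵥ G⁻¹.mulVec gx) := by
    have h1 := hsc x (xs - x)
    rw [show x + (xs - x) = xs from by abel] at h1
    set d := xs - x with hd
    set e := d + G⁻¹.mulVec gx with he
    have hGe : G.mulVec e = G.mulVec d + gx := by
      rw [he, Matrix.mulVec_add, Matrix.mulVec_mulVec, hGinv1, Matrix.one_mulVec]
    have hpos : 0 ≤ G.mulVec e ⬝ᵥ e := by
      rw [dotProduct_comm]; exact psd_quad hG.posSemidef e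
    have h3 : G.mulVec d ⬝ᵥ G⁻¹.mulVec gx = gx ⬝ᵥ d := by
      rw [← dot_symm hGh d _, Matrix.mulVec_mulVec, hGinv1, Matrix.one_mulVec,
        dotProduct_comm]
    have hexp : G.mulVec e ⬝ᵥ e
        = G.mulVec d ⬝ᵥ d + 2 * (gx ⬝ᵥ d) + gx ⬝ᵥ G⁻¹.mulVec gx := by
      rw [hGe, he, add_dotProduct, dotProduct_add, dotProduct_add, h3]
      ring
    linarith
  -- step 3 : eigenvalue bound
  haveI := hn
  set A := Sq * Dp * W⁻¹ * Dp * Sq with hA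
  have hWinvpd : (W⁻¹).PosDef := hWpos.inv
  have hAassoc : A = (Dp * Sq)ᴴ * W⁻¹ * (Dp * Sq) := by
    rw [Matrix.conjTranspose_mul, hSqh.eq, hDph.eq, hA]
    noncomm_ring
  have hAh : A.IsHermitian := by
    rw [hAassoc]
    exact Matrix.isHermitian_conjTranspose_mul_mul _ hWinvpd.isHermitian
  have hApsd : A.PosSemidef := by
    rw [hAassoc]
    exact hWinvpd.posSemidef.conjTranspose_mul_mul_same _
  have hlam0 : 0 ≤ lamMin A := lamMin_nonneg hApsd
  have hSqdet : IsUnit Sq.det := by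
    have hdet : Sq.det * Sq.det = G.det := by
      rw [← Matrix.det_mul, hSq, psdSqrt_mul_self hG.posSemidef]
    rw [isUnit_iff_ne_zero]
    intro h
    rw [h, zero_mul] at hdet
    exact hG.det_pos.ne' hdet.symm
  have hSqinv1 : Sq * Sq⁻¹ = 1 := Matrix.mul_nonsing_inv _ hSqdet
  have hSqinvh : (Sq⁻¹).IsHermitian := by
    show (Sq⁻¹)ᴴ = Sq⁻¹
    rw [Matrix.conjTranspose_eq_transpose_of_trivial, Matrix.transpose_nonsing_inv,
      herm_transpose hSqh]
  set u := Sq⁻¹.mulVec gx with hu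
  have hSu : Sq.mulVec u = gx := by
    rw [hu, Matrix.mulVec_mulVec, hSqinv1, Matrix.one_mulVec]
  have huu : u ⬝ᵥ u = gx ⬝ᵥ G⁻¹.mulVec gx := by
    have h1 : u ⬝ᵥ u = gx ⬝ᵥ (Sq⁻¹ * Sq⁻¹).mulVec gx := by
      calc u ⬝ᵥ u = gx ⬝ᵥ Sq⁻¹.mulVec (Sq⁻¹.mulVec gx) :=
            (dot_symm hSqinvh gx (Sq⁻¹.mulVec gx)).symm
        _ = gx ⬝ᵥ (Sq⁻¹ * Sq⁻¹).mulVec gx := by rw [Matrix.mulVec_mulVec]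
    have h2 : Sq⁻¹ * Sq⁻¹ = G⁻¹ := by
      rw [← Matrix.mul_inv_rev, hSq, psdSqrt_mul_self hG.posSemidef]
    rw [h1, h2]
  have hQu : u ⬝ᵥ A.mulVec u = Q := by
    have h1 : A.mulVec u = Sq.mulVec (Dp.mulVec (W⁻¹.mulVec (Dp.mulVec gx))) := by
      rw [hA, ← Matrix.mulVec_mulVec, ← Matrix.mulVec_mulVec, ← Matrix.mulVec_mulVec,
        ← Matrix.mulVec_mulVec, hSu]
    rw [h1, dot_symm hSqh, hSu, ← diag_dot, hQ]
  have hray : lamMin A * (u ⬝ᵥ u) ≤ u ⬝ᵥ A.mulVec u := lamMin_quad hAh u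
  have h5 : lamMin A * (f x - f xs) ≤ (1/2) * Q := by
    calc lamMin A * (f x - f xs)
        ≤ lamMin A * ((1/2) * (gx ⬝ᵥ G⁻¹.mulVec gx)) :=
          mul_le_mul_of_nonneg_left step2 hlam0
      _ = (1/2) * (lamMin A * (u ⬝ᵥ u)) := by rw [huu]; ring
      _ ≤ (1/2) * (u ⬝ᵥ A.mulVec u) := by linarith
      _ = (1/2) * Q := by rw [hQu]
  linarith
end
end

section
/- Let Ŝ be a uniform sampling of [n] with E[|Ŝ|] = τ, let v ∈ ℝ^n_{++} satisfy E[(AᵀA)_Ŝ] ⪯ D(p)D(v) with p_i = τ/n, and let λ, γ > 0. Define θ(Ŝ) = min_i (p_i λγn)/(v_i + λγn) and σ₁^prox = (τ/n)·min(1, s₁) with s₁ = λ_min[((1/(τγλ)) E[(AᵀA)_Ŝ] + I)^{-1}]. Then θ(Ŝ) ≤ σ₁^prox. -/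
open Matrix BigOperators Finset

noncomputable section

lemma psd_smul' {n : ℕ} {c : ℝ} (hc : 0 ≤ c) {A : Matrix (Fin n) (Fin n) ℝ}
    (hA : A.PosSemidef) : (c • A).PosSemidef := by
  rw [posSemidef_iff_dotProduct_mulVec]
  constructor
  · unfold Matrix.IsHermitian
    rw [conjTranspose_smul, hA.1]
    simp
  · intro x
    simp only [smul_mulVec, dotProduct_smul, smul_eq_mul]
    exact mul_nonneg hc (hA.dotProduct_mulVec_nonneg x)

lemma psd_sum' {n : ℕ} {ι : Type*} (s : Finset ι) (f : ι → Matrix (Fin n) (Fin n) ℝ)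
    (hf : ∀ i ∈ s, (f i).PosSemidef) : (∑ i ∈ s, f i).PosSemidef := by
  induction s using Finset.cons_induction with
  | empty => simpa using Matrix.PosSemidef.zero
  | cons a s ha ih =>
    rw [Finset.sum_cons]
    exact (hf a (by simp)).add (ih fun i hi => hf i (by simp [hi]))

theorem stmt_13 {d n : ℕ} (hn : 0 < n) (A : Matrix (Fin d) (Fin n) ℝ)
    (P : Finset (Fin n) → ℝ) (hP : IsSampling P)
    (τ : ℝ) (hτpos : 0 < τ) (huni : ∀ i : Fin n, prob P i = τ / n)
    (v : Fin n → ℝ) (hv : ∀ i, 0 < v i)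
    (hESO : (Matrix.diagonal (prob P) * Matrix.diagonal v -
      mExp P (restr (Aᵀ * A))).PosSemidef)
    (γ lam : ℝ) (hγ : 0 < γ) (hlam : 0 < lam) :
    sInf (Set.range fun i : Fin n => prob P i * lam * γ * n / (v i + lam * γ * n)) ≤
      (τ / n) * min 1 (lamMin (((1 / (τ * γ * lam)) • mExp P (restr (Aᵀ * A)) + 1)⁻¹)) := by
  have hnR : (0:ℝ) < n := by exact_mod_cast hn
  set M := mExp P (restr (Aᵀ * A)) with hMdef
  set c : ℝ := τ * γ * lam with hcdef
  have hc : 0 < c := by positivity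
  -- M is PSD
  have hMpsd : M.PosSemidef := by
    apply psd_sum'
    intro S _
    apply psd_smul' (hP.1 S)
    have hAtA : (Aᵀ * A).PosSemidef := by
      have := Matrix.posSemidef_conjTranspose_mul_self A
      simpa using this
    have hproj : (projMat n S)ᴴ = projMat n S := by
      simp [projMat, Matrix.diagonal_conjTranspose]
    have := hAtA.conjTranspose_mul_mul_same (projMat n S)
    rw [hproj] at this
    simpa [restr] using this
  -- N and its inverse
  set N : Matrix (Fin n) (Fin n) ℝ := (1 / c) • M + 1 with hNdef
  have hNpd : N.PosDef := Matrix.PosDef.posSemidef_add (psd_smul' (by positivity) hMpsd) Matrix.PosDef.one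
  have hNB : N * N⁻¹ = 1 := Matrix.mul_nonsing_inv N ((Matrix.isUnit_iff_isUnit_det N).mp hNpd.isUnit)
  have hBherm : (N⁻¹).IsHermitian := hNpd.isHermitian.inv
  -- max of v
  obtain ⟨i₀, -, hi₀⟩ := Finset.exists_max_image (univ : Finset (Fin n)) v ⟨⟨0, hn⟩, mem_univ _⟩
  set w : ℝ := v i₀ with hwdef
  have hw : 0 < w := hv i₀
  -- quadratic form bounds
  have hquad : ∀ x : Fin n → ℝ, x ⬝ᵥ M *ᵥ x ≤ (τ / n) * w * (x ⬝ᵥ x) := by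
    intro x
    have h1 := hESO.dotProduct_mulVec_nonneg x
    simp only [star_trivial, sub_mulVec, dotProduct_sub, sub_nonneg] at h1
    have h2 : x ⬝ᵥ (Matrix.diagonal (prob P) * Matrix.diagonal v) *ᵥ x
        = ∑ i, (τ / n) * v i * (x i * x i) := by
      rw [Matrix.diagonal_mul_diagonal]
      simp only [Matrix.mulVec_diagonal, dotProduct]
      refine Finset.sum_congr rfl fun i _ => ?_
      rw [huni i]; ring
    have h3 : ∑ i, (τ / n) * v i * (x i * x i) ≤ ∑ i, (τ / n) * w * (x i * x i) := by
      refine Finset.sum_le_sum fun i _ => ?_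
      have hvw : v i ≤ w := hi₀ i (mem_univ i)
      exact mul_le_mul_of_nonneg_right
        (mul_le_mul_of_nonneg_left hvw (div_pos hτpos hnR).le) (mul_self_nonneg (x i))
    calc x ⬝ᵥ M *ᵥ x ≤ x ⬝ᵥ (Matrix.diagonal (prob P) * Matrix.diagonal v) *ᵥ x := h1
      _ = ∑ i, (τ / n) * v i * (x i * x i) := h2
      _ ≤ ∑ i, (τ / n) * w * (x i * x i) := h3
      _ = (τ / n) * w * (x ⬝ᵥ x) := by rw [dotProduct, Finset.mul_sum]
  -- r₀
  set r₀ : ℝ := lam * γ * n / (w + lam * γ * n) with hr₀def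
  have hr₀pos : 0 < r₀ := by positivity
  have hr₀le1 : r₀ ≤ 1 := by
    rw [div_le_one (by positivity)]; linarith
  -- eigenvalue set
  have hEig : ∀ r ∈ {r : ℝ | ∃ x : Fin n → ℝ, x ≠ 0 ∧ (N⁻¹).mulVec x = r • x}, r₀ ≤ r := by
    rintro r ⟨x, hx0, hrx⟩
    have hq : 0 < x ⬝ᵥ x := by
      have hnn : 0 ≤ x ⬝ᵥ x := Finset.sum_nonneg fun i _ => mul_self_nonneg (x i)
      rcases lt_or_eq_of_le hnn with h | h
      · exact h
      · exact absurd (dotProduct_self_eq_zero.mp h.symm) hx0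
    have hNx : r • (N *ᵥ x) = x := by
      have : N *ᵥ ((N⁻¹) *ᵥ x) = x := by
        rw [Matrix.mulVec_mulVec, hNB, Matrix.one_mulVec]
      rw [hrx, Matrix.mulVec_smul] at this
      exact this
    set t : ℝ := x ⬝ᵥ N *ᵥ x with htdef
    have ht_eq : t = (1 / c) * (x ⬝ᵥ M *ᵥ x) + x ⬝ᵥ x := by
      simp [htdef, hNdef, Matrix.add_mulVec, dotProduct_add, Matrix.smul_mulVec,
        dotProduct_smul, Matrix.one_mulVec, smul_eq_mul]
    have hMx0 : 0 ≤ x ⬝ᵥ M *ᵥ x := by simpa using hMpsd.dotProduct_mulVec_nonneg x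
    have ht_lb : x ⬝ᵥ x ≤ t := by
      rw [ht_eq]
      have : 0 ≤ (1 / c) * (x ⬝ᵥ M *ᵥ x) := by positivity
      linarith
    have ht_ub : t ≤ (1 + (τ / n) * w / c) * (x ⬝ᵥ x) := by
      rw [ht_eq]
      have h1c : 0 < 1 / c := by positivity
      have expand : (1 + (τ / n) * w / c) * (x ⬝ᵥ x)
          = x ⬝ᵥ x + 1 / c * ((τ / n) * w * (x ⬝ᵥ x)) := by ring
      rw [expand]
      have := mul_le_mul_of_nonneg_left (hquad x) h1c.le
      linarith
    have hrt : r * t = x ⬝ᵥ x := by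
      have : x ⬝ᵥ (r • (N *ᵥ x)) = x ⬝ᵥ x := by rw [hNx]
      simpa [dotProduct_smul, smul_eq_mul, htdef] using this
    have htpos : 0 < t := lt_of_lt_of_le hq ht_lb
    -- r = q / t
    have hr : r = (x ⬝ᵥ x) / t := by rw [eq_div_iff htpos.ne']; linarith [hrt]
    rw [hr]
    rw [le_div_iff₀ htpos]
    have key : r₀ * (1 + (τ / n) * w / c) = 1 := by
      rw [hr₀def, hcdef]
      field_simp
      ring
    calc r₀ * t ≤ r₀ * ((1 + (τ / n) * w / c) * (x ⬝ᵥ x)) :=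
          mul_le_mul_of_nonneg_left ht_ub hr₀pos.le
      _ = (r₀ * (1 + (τ / n) * w / c)) * (x ⬝ᵥ x) := by ring
      _ = x ⬝ᵥ x := by rw [key, one_mul]
  have hNe : {r : ℝ | ∃ x : Fin n → ℝ, x ≠ 0 ∧ (N⁻¹).mulVec x = r • x}.Nonempty := by
    haveI : Nonempty (Fin n) := ⟨⟨0, hn⟩⟩
    refine ⟨hBherm.eigenvalues ⟨0, hn⟩, ⇑(hBherm.eigenvectorBasis ⟨0, hn⟩), ?_, ?_⟩
    · have := hBherm.eigenvectorBasis.orthonormal.ne_zero ⟨0, hn⟩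
      intro hcon
      apply this
      ext j
      exact congrFun hcon j
    · simpa using hBherm.mulVec_eigenvectorBasis ⟨0, hn⟩
  have hlamMin : r₀ ≤ lamMin (N⁻¹) := le_csInf hNe hEig
  -- final
  have hf : sInf (Set.range fun i : Fin n => prob P i * lam * γ * n / (v i + lam * γ * n))
      ≤ prob P i₀ * lam * γ * n / (v i₀ + lam * γ * n) :=
    csInf_le (Set.Finite.bddBelow (Set.finite_range _)) ⟨i₀, rfl⟩
  refine hf.trans ?_
  rw [huni i₀]
  have hmin : r₀ ≤ min 1 (lamMin (((1 / c) • M + 1)⁻¹)) := le_min hr₀le1 hlamMin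
  have : τ / n * lam * γ * n / (v i₀ + lam * γ * n) = (τ / n) * r₀ := by
    rw [hr₀def, hwdef]
    field_simp
  rw [this]
  have hτn : 0 < τ / n := by positivity
  calc (τ / n) * r₀ ≤ (τ / n) * min 1 (lamMin (((1 / c) • M + 1)⁻¹)) :=
        mul_le_mul_of_nonneg_left hmin hτn.le
    _ = _ := by rw [hcdef, hMdef]
end
end

section
/- Let v, γ, p ∈ ℝ^n with v, p > 0, γ ≥ 0, let M ⪰ 0 and G ⪰ 0 be n×n matrices, and suppose E[M_Ŝ] ⪯ D(p)D(v) holds for a uniform sampling Ŝ with p ≡ τ/n. Then s₁ := λ_min[((n/τ)E[M_Ŝ] + D(γ))^{-1}(D(γ)+G)] ≥ s₃ := λ_min[(D(v+γ))^{-1}(D(γ)+G)], assuming (n/τ)E[M_Ŝ] + D(γ) ≻ 0 and D(v+γ) ≻ 0. Consequently σ₁^prox := (τ/n)min(1,s₁) ≥ σ₃^prox := (τ/n)min(1,s₃). -/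
open Matrix BigOperators Finset

noncomputable section

namespace SDNAAux

variable {n : ℕ}

def eigSet (A : Matrix (Fin n) (Fin n) ℝ) : Set ℝ :=
  {r : ℝ | ∃ x : Fin n → ℝ, x ≠ 0 ∧ A.mulVec x = r • x}

lemma eigSet_conj (Q A : Matrix (Fin n) (Fin n) ℝ) (hQ : IsUnit Q.det) :
    eigSet (Q⁻¹ * A * Q) = eigSet A := by
  ext r
  constructor
  · rintro ⟨x, hx, hAx⟩
    refine ⟨Q.mulVec x, fun h => hx ?_, ?_⟩
    · have h2 := congrArg (Q⁻¹.mulVec) h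
      rwa [mulVec_mulVec, Matrix.nonsing_inv_mul _ hQ, one_mulVec, mulVec_zero] at h2
    · have h2 := congrArg (Q.mulVec) hAx
      rw [mulVec_mulVec, mulVec_smul, show Q * (Q⁻¹ * A * Q) = (Q * Q⁻¹) * A * Q by
        simp only [Matrix.mul_assoc], Matrix.mul_nonsing_inv _ hQ, Matrix.one_mul, ← mulVec_mulVec] at h2
      exact h2
  · rintro ⟨y, hy, hAy⟩
    refine ⟨Q⁻¹.mulVec y, fun h => hy ?_, ?_⟩
    · have h2 := congrArg (Q.mulVec) h
      rwa [mulVec_mulVec, Matrix.mul_nonsing_inv _ hQ, one_mulVec, mulVec_zero] at h2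
    · rw [mulVec_mulVec, show Q⁻¹ * A * Q * Q⁻¹ = Q⁻¹ * A * (Q * Q⁻¹) by simp only [Matrix.mul_assoc],
        Matrix.mul_nonsing_inv _ hQ, Matrix.mul_one, ← mulVec_mulVec, hAy, mulVec_smul]

lemma star_eq_self (x : Fin n → ℝ) : star x = x := by
  funext i; simp

open scoped MatrixOrder in
set_option maxHeartbeats 800000 in
lemma key (hn : n ≠ 0) {X Z : Matrix (Fin n) (Fin n) ℝ}
    (hX : X.PosDef) (hZ : Z.PosSemidef) :
    (∃ x : Fin n → ℝ, x ≠ 0 ∧ Z.mulVec x = lamMin (X⁻¹ * Z) • X.mulVec x) ∧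
    (∀ x : Fin n → ℝ, lamMin (X⁻¹ * Z) * (x ⬝ᵥ X.mulVec x) ≤ x ⬝ᵥ Z.mulVec x) := by
  have : Nonempty (Fin n) := ⟨⟨0, Nat.pos_of_ne_zero hn⟩⟩
  set S := CFC.sqrt X with hSdef
  have hSpsd : S.PosSemidef := (CFC.sqrt_nonneg X).posSemidef
  have hSS : S * S = X := CFC.sqrt_mul_sqrt_self X hX.posSemidef.nonneg
  have hSdet : IsUnit S.det := by
    refine isUnit_iff_ne_zero.mpr fun h => ?_
    have : S.det * S.det = X.det := by rw [← Matrix.det_mul, hSS]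
    rw [h, mul_zero] at this
    exact hX.det_pos.ne' this.symm
  have hXdet : IsUnit X.det := isUnit_iff_ne_zero.mpr hX.det_pos.ne'
  set W := S⁻¹ * Z * S⁻¹ with hWdef
  have hSinv : (S⁻¹)ᴴ = S⁻¹ := by rw [Matrix.conjTranspose_nonsing_inv, hSpsd.1]
  have hWpsd : W.PosSemidef := by
    have h := hZ.conjTranspose_mul_mul_same S⁻¹
    rwa [hSinv] at h
  have hW : W.IsHermitian := hWpsd.1
  obtain ⟨i₀, _, hi₀⟩ := Finset.exists_min_image Finset.univ hW.eigenvalues Finset.univ_nonempty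
  set μ := hW.eigenvalues i₀ with hμdef
  have hi₀' : ∀ j, μ ≤ hW.eigenvalues j := fun j => hi₀ j (Finset.mem_univ j)
  have hconj : X⁻¹ * Z = S⁻¹ * W * S := by
    rw [← hSS, Matrix.mul_inv_rev, hWdef,
      show S⁻¹ * (S⁻¹ * Z * S⁻¹) * S = S⁻¹ * S⁻¹ * Z * (S⁻¹ * S) by simp only [Matrix.mul_assoc],
      Matrix.nonsing_inv_mul _ hSdet, Matrix.mul_one]
  -- spectral theorem
  set U : Matrix (Fin n) (Fin n) ℝ := (hW.eigenvectorUnitary : Matrix (Fin n) (Fin n) ℝ)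
    with hUdef
  have hUU : U * star U = 1 := Matrix.mem_unitaryGroup_iff.mp hW.eigenvectorUnitary.2
  have hsub : W - μ • 1 = U * Matrix.diagonal (fun i => hW.eigenvalues i - μ) * star U := by
    have hD : Matrix.diagonal (fun i => hW.eigenvalues i - μ) =
        Matrix.diagonal (RCLike.ofReal ∘ hW.eigenvalues) - μ • (1 : Matrix (Fin n) (Fin n) ℝ) := by
      rw [smul_one_eq_diagonal, ← Matrix.diagonal_sub]
      simp [RCLike.ofReal_real_eq_id]
    rw [hD, Matrix.mul_sub, Matrix.sub_mul, ← (show W = U * Matrix.diagonal (RCLike.ofReal ∘ hW.eigenvalues) * star U by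
        rw [hUdef]; exact hW.spectral_theorem),
      Matrix.mul_smul, Matrix.smul_mul, Matrix.mul_one, hUU]
  have hWsub : (W - μ • 1).PosSemidef := by
    rw [hsub]
    have hd : (Matrix.diagonal (fun i => hW.eigenvalues i - μ)).PosSemidef :=
      Matrix.posSemidef_diagonal_iff.mpr fun i => sub_nonneg.mpr (hi₀' i)
    simpa [Matrix.star_eq_conjTranspose] using hd.mul_mul_conjTranspose_same U
  have hlow : ∀ r ∈ eigSet W, μ ≤ r := by
    rintro r ⟨x, hx, hWx⟩
    have h0 := hWsub.dotProduct_mulVec_nonneg x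
    rw [star_eq_self, Matrix.sub_mulVec, hWx, Matrix.smul_mulVec, one_mulVec,
      dotProduct_sub, dotProduct_smul, dotProduct_smul] at h0
    have hxx : 0 < x ⬝ᵥ x := by
      have hnn := dotProduct_star_self_nonneg x
      rw [star_eq_self] at hnn
      rcases lt_or_eq_of_le hnn with h | h
      · exact h
      · exact absurd (dotProduct_self_eq_zero.mp h.symm) hx
    simp only [smul_eq_mul] at h0
    nlinarith
  have hμmem : μ ∈ eigSet W :=
    ⟨⇑(hW.eigenvectorBasis i₀), fun h => hW.eigenvectorBasis.orthonormal.ne_zero i₀ (by simpa using h),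
      hW.mulVec_eigenvectorBasis i₀⟩
  have hbdd : BddBelow (eigSet W) := ⟨μ, fun r hr => hlow r hr⟩
  have hlam : lamMin (X⁻¹ * Z) = μ := by
    have he : eigSet (X⁻¹ * Z) = eigSet W := by rw [hconj, eigSet_conj S W hSdet]
    have : lamMin (X⁻¹ * Z) = sInf (eigSet W) := by rw [lamMin, ← he]; rfl
    rw [this]
    exact le_antisymm (csInf_le hbdd hμmem) (le_csInf ⟨μ, hμmem⟩ hlow)
  -- part (b) : Z - μ • X is PSD
  have hT : (Z - μ • X).PosSemidef := by
    have h3 := hWsub.conjTranspose_mul_mul_same S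
    have heq : Sᴴ * (W - μ • 1) * S = Z - μ • X := by
      have e1 : S * W * S = Z := by
        rw [hWdef, show S * (S⁻¹ * Z * S⁻¹) * S = (S * S⁻¹) * Z * (S⁻¹ * S) by
            simp only [Matrix.mul_assoc],
          Matrix.mul_nonsing_inv _ hSdet, Matrix.nonsing_inv_mul _ hSdet,
          Matrix.one_mul, Matrix.mul_one]
      have e2 : S * (μ • (1 : Matrix (Fin n) (Fin n) ℝ)) * S = μ • X := by
        rw [Matrix.mul_smul, Matrix.smul_mul, Matrix.mul_one, hSS]
      rw [hSpsd.1, Matrix.mul_sub, Matrix.sub_mul, e1, e2]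
    rwa [heq] at h3
  clear_value S W μ U
  constructor
  · -- part (a)
    obtain ⟨x, hx, hxe⟩ : μ ∈ eigSet (X⁻¹ * Z) := by
      rw [hconj, eigSet_conj S W hSdet]; exact hμmem
    refine ⟨x, hx, ?_⟩
    have h2 := congrArg (X.mulVec) hxe
    rw [mulVec_mulVec, ← Matrix.mul_assoc, Matrix.mul_nonsing_inv _ hXdet, Matrix.one_mul,
      mulVec_smul] at h2
    rw [hlam]
    exact h2
  · intro x
    have h0 := hT.dotProduct_mulVec_nonneg x
    rw [star_eq_self, Matrix.sub_mulVec, Matrix.smul_mulVec, dotProduct_sub,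
      dotProduct_smul] at h0
    simp only [smul_eq_mul] at h0
    rw [hlam]
    exact sub_nonneg.mp h0

lemma smul_psd {c : ℝ} (hc : 0 ≤ c) {A : Matrix (Fin n) (Fin n) ℝ} (hA : A.PosSemidef) :
    (c • A).PosSemidef := by
  refine Matrix.PosSemidef.of_dotProduct_mulVec_nonneg ?_ ?_
  · rw [Matrix.IsHermitian, Matrix.conjTranspose_smul, hA.1]
    simp
  · intro x
    rw [Matrix.smul_mulVec, dotProduct_smul, smul_eq_mul]
    exact mul_nonneg hc (hA.dotProduct_mulVec_nonneg x)

end SDNAAux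


open SDNAAux in
theorem stmt_14 {n : ℕ} (v γ : Fin n → ℝ) (hv : ∀ i, 0 < v i) (hγ : ∀ i, 0 ≤ γ i)
    (M G : Matrix (Fin n) (Fin n) ℝ) (hM : M.PosSemidef) (hG : G.PosSemidef)
    (P : Finset (Fin n) → ℝ) (hP : IsSampling P)
    (τ : ℝ) (hτpos : 0 < τ) (huni : ∀ i : Fin n, prob P i = τ / n)
    (hESO : (Matrix.diagonal (prob P) * Matrix.diagonal v - mExp P (restr M)).PosSemidef)
    (hX : (((n : ℝ) / τ) • mExp P (restr M) + Matrix.diagonal γ).PosDef)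
    (hDv : (Matrix.diagonal (v + γ)).PosDef)
    (s₁ s₃ : ℝ)
    (hs₁ : s₁ = lamMin ((((n : ℝ) / τ) • mExp P (restr M) + Matrix.diagonal γ)⁻¹ *
      (Matrix.diagonal γ + G)))
    (hs₃ : s₃ = lamMin ((Matrix.diagonal (v + γ))⁻¹ * (Matrix.diagonal γ + G))) :
    s₃ ≤ s₁ ∧ (τ / n) * min 1 s₃ ≤ (τ / n) * min 1 s₁ := by
  classical
  have hτn : 0 ≤ τ / (n : ℝ) := div_nonneg hτpos.le (Nat.cast_nonneg n)
  rcases Nat.eq_zero_or_pos n with hn | hn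
  · subst hn
    have hempty : ∀ A : Matrix (Fin 0) (Fin 0) ℝ, lamMin A = 0 := by
      intro A
      have he : {r : ℝ | ∃ x : Fin 0 → ℝ, x ≠ 0 ∧ A.mulVec x = r • x} = ∅ := by
        ext r
        simp only [Set.mem_setOf_eq, Set.mem_empty_iff_false, iff_false, not_exists]
        rintro x ⟨hx, -⟩
        exact hx (Subsingleton.elim x 0)
      rw [lamMin, he, Real.sInf_empty]
    rw [hs₁, hs₃, hempty, hempty]
    exact ⟨le_refl _, le_refl _⟩
  · have hn' : n ≠ 0 := hn.ne'
    have hnR : (0 : ℝ) < n := by exact_mod_cast hn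
    set E := mExp P (restr M) with hE
    set X := ((n : ℝ) / τ) • E + Matrix.diagonal γ with hXdef
    set Z := Matrix.diagonal γ + G with hZdef
    set Y := Matrix.diagonal (v + γ) with hYdef
    have hZpsd : Z.PosSemidef := (Matrix.PosSemidef.diagonal fun i => hγ i).add hG
    have hYX : (Y - X).PosSemidef := by
      have h1 : Matrix.diagonal (prob P) * Matrix.diagonal v
          = Matrix.diagonal (fun i => (τ / (n : ℝ)) * v i) := by
        rw [Matrix.diagonal_mul_diagonal,
          show (fun i => prob P i * v i) = fun i => τ / (n:ℝ) * v i from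
            funext fun i => by rw [huni i]]
      have h2 : (Matrix.diagonal (fun i => (τ / (n : ℝ)) * v i) - E).PosSemidef := by
        rw [← h1]
        exact hESO
      have h3 := smul_psd (c := (n : ℝ) / τ) (div_nonneg hnR.le hτpos.le) h2
      have h4 : ((n : ℝ) / τ) • (Matrix.diagonal (fun i => (τ / (n : ℝ)) * v i) - E)
          = Matrix.diagonal v - ((n : ℝ) / τ) • E := by
        rw [smul_sub]
        have hd : ((n : ℝ) / τ) • Matrix.diagonal (fun i => (τ / (n : ℝ)) * v i)
            = Matrix.diagonal v := by
          rw [← Matrix.diagonal_smul]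
          refine congrArg Matrix.diagonal (funext fun i => ?_)
          simp only [Pi.smul_apply, smul_eq_mul]
          field_simp
        rw [hd]
      have h5 : Y - X = Matrix.diagonal v - ((n : ℝ) / τ) • E := by
        have hvγ : Matrix.diagonal (v + γ) = Matrix.diagonal v + Matrix.diagonal γ := by
          rw [Matrix.diagonal_add]
          rfl
        rw [hYdef, hXdef, hvγ]
        abel
      rw [h5, ← h4]
      exact h3
    obtain ⟨⟨x, hx, hxE⟩, hB1⟩ := key hn' hX hZpsd
    obtain ⟨⟨y, hy, hyE⟩, hB3⟩ := key hn' hDv hZpsd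
    have hstar : ∀ w : Fin n → ℝ, star w = w := star_eq_self
    -- s₃ is nonnegative
    have hyZ : y ⬝ᵥ Z.mulVec y = s₃ * (y ⬝ᵥ Y.mulVec y) := by
      rw [hyE, dotProduct_smul, smul_eq_mul, hs₃]
    have hyZ0 : 0 ≤ y ⬝ᵥ Z.mulVec y := by
      have h := hZpsd.dotProduct_mulVec_nonneg y
      rwa [hstar] at h
    have hyY : 0 < y ⬝ᵥ Y.mulVec y := by
      have h := hDv.dotProduct_mulVec_pos hy
      rwa [hstar] at h
    have hs₃0 : 0 ≤ s₃ := by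
      by_contra hneg
      push_neg at hneg
      linarith [hyZ0, hyZ, mul_neg_of_neg_of_pos hneg hyY]
    -- main inequality
    have hxZ : x ⬝ᵥ Z.mulVec x = s₁ * (x ⬝ᵥ X.mulVec x) := by
      rw [hxE, dotProduct_smul, smul_eq_mul, hs₁]
    have hxX : 0 < x ⬝ᵥ X.mulVec x := by
      have h := hX.dotProduct_mulVec_pos hx
      rwa [hstar] at h
    have hxXY : x ⬝ᵥ X.mulVec x ≤ x ⬝ᵥ Y.mulVec x := by
      have h := hYX.dotProduct_mulVec_nonneg x
      rw [hstar, Matrix.sub_mulVec, dotProduct_sub] at h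
      linarith
    have hb := hB3 x
    rw [← hs₃] at hb
    have hmono : s₃ * (x ⬝ᵥ X.mulVec x) ≤ s₃ * (x ⬝ᵥ Y.mulVec x) :=
      mul_le_mul_of_nonneg_left hxXY hs₃0
    have hfin : s₃ * (x ⬝ᵥ X.mulVec x) ≤ s₁ * (x ⬝ᵥ X.mulVec x) := by linarith
    have h31 : s₃ ≤ s₁ := le_of_mul_le_mul_right hfin hxX
    exact ⟨h31, mul_le_mul_of_nonneg_left (min_le_min (le_refl 1) h31) hτn⟩
end
end

section
/- Let M be an n×n symmetric matrix, D its diagonal part, and Ŝ the τ-nice sampling on [n] (uniform over all subsets of cardinality τ), with 1 ≤ τ ≤ n and n ≥ 2. Then E[M_Ŝ] = (τ/n)[(1 − (τ−1)/(n−1)) D + ((τ−1)/(n−1)) M]. -/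
open Matrix BigOperators Finset

noncomputable section

/-- The `τ`-nice sampling: uniform distribution over subsets of `[n]` of cardinality `τ`. -/
def tauNice (n τ : ℕ) : Finset (Fin n) → ℝ :=
  fun S => if S.card = τ then (1 : ℝ) / (n.choose τ) else 0

lemma count_mem {n τ : ℕ} (hτ : 1 ≤ τ) (i : Fin n) :
    (Finset.univ.filter (fun S : Finset (Fin n) => S.card = τ ∧ i ∈ S)).card
      = (n - 1).choose (τ - 1) := by
  have h1 : (Finset.univ.erase i).card = n - 1 := by
    rw [Finset.card_erase_of_mem (Finset.mem_univ i), Finset.card_univ, Fintype.card_fin]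
  rw [← h1, ← Finset.card_powersetCard (τ - 1) (Finset.univ.erase i)]
  apply Finset.card_bij (fun S _ => S.erase i)
  · intro S hS
    simp only [mem_filter, mem_univ, true_and] at hS
    simp only [mem_powersetCard]
    constructor
    · intro x hx; simp at hx ⊢; tauto
    · rw [Finset.card_erase_of_mem hS.2, hS.1]
  · intro S hS T hT h
    simp only [mem_filter, mem_univ, true_and] at hS hT
    rw [← Finset.insert_erase hS.2, ← Finset.insert_erase hT.2, h]
  · intro T hT
    simp only [mem_powersetCard] at hT
    refine ⟨insert i T, ?_, ?_⟩
    · simp only [mem_filter, mem_univ, true_and]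
      have hi : i ∉ T := fun h => by simpa using hT.1 h
      constructor
      · rw [Finset.card_insert_of_notMem hi, hT.2]; omega
      · exact Finset.mem_insert_self i T
    · have hi : i ∉ T := fun h => by simpa using hT.1 h
      rw [Finset.erase_insert hi]

lemma count_pair {n τ : ℕ} (hτ : 2 ≤ τ) {i j : Fin n} (hij : i ≠ j) :
    (Finset.univ.filter (fun S : Finset (Fin n) => S.card = τ ∧ i ∈ S ∧ j ∈ S)).card
      = (n - 2).choose (τ - 2) := by
  have hcard : ((Finset.univ.erase i).erase j).card = n - 2 := by
    rw [Finset.card_erase_of_mem (by simp [hij.symm]),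
      Finset.card_erase_of_mem (Finset.mem_univ i), Finset.card_univ, Fintype.card_fin]
    omega
  rw [← hcard, ← Finset.card_powersetCard (τ - 2) ((Finset.univ.erase i).erase j)]
  apply Finset.card_bij (fun S _ => (S.erase i).erase j)
  · intro S hS
    simp only [mem_filter, mem_univ, true_and] at hS
    simp only [mem_powersetCard]
    constructor
    · intro x hx; simp at hx ⊢; tauto
    · rw [Finset.card_erase_of_mem (by simp [hS.2.2, hij.symm]),
        Finset.card_erase_of_mem hS.2.1, hS.1]
      omega
  · intro S hS T hT h
    simp only [mem_filter, mem_univ, true_and] at hS hT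
    have : insert i (insert j ((S.erase i).erase j)) = S := by
      rw [Finset.insert_erase (by simp [hS.2.2, hij.symm]), Finset.insert_erase hS.2.1]
    rw [← this, h, Finset.insert_erase (by simp [hT.2.2, hij.symm]),
      Finset.insert_erase hT.2.1]
  · intro T hT
    simp only [mem_powersetCard] at hT
    have hiT : i ∉ T := fun h => by simpa using (hT.1 h)
    have hjT : j ∉ T := fun h => by simpa [hij.symm] using (hT.1 h)
    refine ⟨insert i (insert j T), ?_, ?_⟩
    · simp only [mem_filter, mem_univ, true_and]
      refine ⟨?_, by simp, by simp⟩
      rw [Finset.card_insert_of_notMem (by simp [hiT, hij]),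
        Finset.card_insert_of_notMem hjT, hT.2]
      omega
    · rw [Finset.erase_insert (by simp [hiT, hij]), Finset.erase_insert hjT]

theorem stmt_17 {n : ℕ} (hn : 2 ≤ n) (M : Matrix (Fin n) (Fin n) ℝ) (hM : M.IsSymm)
    (τ : ℕ) (hτ1 : 1 ≤ τ) (hτn : τ ≤ n) :
    mExp (tauNice n τ) (restr M) =
      ((τ : ℝ) / n) •
        ((1 - ((τ : ℝ) - 1) / ((n : ℝ) - 1)) • Matrix.diagonal (fun i => M i i) +
          (((τ : ℝ) - 1) / ((n : ℝ) - 1)) • M) := by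
  have hC : (n.choose τ : ℝ) ≠ 0 := Nat.cast_ne_zero.mpr (Nat.choose_pos hτn).ne'
  have hn0 : (n : ℝ) ≠ 0 := Nat.cast_ne_zero.mpr (by omega)
  have hn1 : (n : ℝ) - 1 ≠ 0 := by
    have : (2 : ℝ) ≤ (n : ℝ) := by exact_mod_cast hn
    linarith
  have key1 : n * (n - 1).choose (τ - 1) = n.choose τ * τ := by
    have h := Nat.add_one_mul_choose_eq (n - 1) (τ - 1)
    have e1 : n - 1 + 1 = n := by omega
    have e2 : τ - 1 + 1 = τ := by omega
    rwa [e1, e2] at h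
  ext i j
  have hL : mExp (tauNice n τ) (restr M) i j =
      ((Finset.univ.filter (fun S : Finset (Fin n) => S.card = τ ∧ i ∈ S ∧ j ∈ S)).card : ℝ)
        / (n.choose τ) * M i j := by
    simp only [mExp, Matrix.sum_apply, Matrix.smul_apply, restr, projMat,
      Matrix.mul_diagonal, Matrix.diagonal_mul, tauNice, smul_eq_mul]
    rw [Finset.sum_congr rfl (fun S _ => show _ =
        if S.card = τ ∧ i ∈ S ∧ j ∈ S then M i j / (n.choose τ) else 0 by
      split_ifs <;> simp_all <;> ring)]
    rw [Finset.sum_ite, Finset.sum_const, Finset.sum_const_zero, add_zero, nsmul_eq_mul]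
    ring
  rw [hL]
  by_cases hij : i = j
  · subst hij
    have hfe : (Finset.univ.filter (fun S : Finset (Fin n) => S.card = τ ∧ i ∈ S ∧ i ∈ S))
        = Finset.univ.filter (fun S : Finset (Fin n) => S.card = τ ∧ i ∈ S) := by
      apply Finset.filter_congr; intro S _; simp [and_assoc]
    rw [hfe, count_mem hτ1 i]
    simp only [Matrix.smul_apply, Matrix.add_apply, Matrix.diagonal_apply_eq, smul_eq_mul]
    have hc : (((n - 1).choose (τ - 1) : ℕ) : ℝ) / (n.choose τ) = (τ : ℝ) / n := by
      rw [div_eq_div_iff hC hn0]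
      have := congrArg (fun k : ℕ => (k : ℝ)) key1
      push_cast at this ⊢
      linarith
    rw [hc]; ring
  · simp only [Matrix.smul_apply, Matrix.add_apply, Matrix.diagonal_apply_ne _ hij,
      smul_eq_mul, mul_zero]
    by_cases hτ2 : 2 ≤ τ
    · rw [count_pair hτ2 hij]
      have key2 : (n - 1) * (n - 2).choose (τ - 2) = (n - 1).choose (τ - 1) * (τ - 1) := by
        have h := Nat.add_one_mul_choose_eq (n - 2) (τ - 2)
        have e1 : n - 2 + 1 = n - 1 := by omega
        have e2 : τ - 2 + 1 = τ - 1 := by omega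
        rwa [e1, e2] at h
      have key3 : n * ((n - 1) * (n - 2).choose (τ - 2)) = n.choose τ * τ * (τ - 1) := by
        rw [key2, ← mul_assoc, key1]
      have hc : (((n - 2).choose (τ - 2) : ℕ) : ℝ) / (n.choose τ)
          = (τ : ℝ) / n * (((τ : ℝ) - 1) / ((n : ℝ) - 1)) := by
        rw [div_mul_div_comm, div_eq_div_iff hC (mul_ne_zero hn0 hn1)]
        have := congrArg (fun k : ℕ => (k : ℝ)) key3
        push_cast [Nat.cast_sub (by omega : 1 ≤ n), Nat.cast_sub (by omega : 1 ≤ τ)] at this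
        linear_combination this
      rw [hc]; ring
    · have hτe : τ = 1 := by omega
      have hfe : (Finset.univ.filter (fun S : Finset (Fin n) => S.card = τ ∧ i ∈ S ∧ j ∈ S))
          = ∅ := by
        rw [Finset.filter_eq_empty_iff]
        rintro S - ⟨h1, hi, hj⟩
        have := Finset.one_lt_card.mpr ⟨i, hi, j, hj, hij⟩
        omega
      rw [hfe]
      subst hτe
      simp
end
end

section
/- Let M ≻ 0 be n×n with diagonal part D, let Ŝ be the τ-nice sampling (n ≥ 2, 1 ≤ τ ≤ n), let β ∈ [1,τ] satisfy E[M_Ŝ] ⪯ (τ/n) β D, and set G = M. Define σ₂ = (τ²/n²) λ_min(M^{1/2}(E[M_Ŝ])^{-1}M^{1/2}) and σ₃ = (τ/n)β^{-1} λ_min(M^{1/2} D^{-1} M^{1/2}). Then σ₂ = β σ₃ / [(1 − (τ−1)/(n−1)) + (n/τ)((τ−1)/(n−1)) β σ₃]. -/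
open Matrix BigOperators Finset

noncomputable section

open scoped ComplexOrder in
/-- The square root of a positive semidefinite matrix (removed from Mathlib; old definition). -/
def Matrix.PosSemidef.sqrt {n 𝕜 : Type*} [Fintype n] [RCLike 𝕜] [DecidableEq n]
    {A : Matrix n n 𝕜} (hA : A.PosSemidef) : Matrix n n 𝕜 :=
  hA.1.eigenvectorUnitary.1 * diagonal ((↑) ∘ (√·) ∘ hA.1.eigenvalues) *
    (star hA.1.eigenvectorUnitary : Matrix n n 𝕜)

namespace Spec18
variable {n : ℕ}

lemma sqrt_isHermitian' {M : Matrix (Fin n) (Fin n) ℝ} (hM : M.PosSemidef) :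
    hM.sqrt.IsHermitian := by
  unfold Matrix.IsHermitian Matrix.PosSemidef.sqrt
  rw [conjTranspose_mul, conjTranspose_mul, diagonal_conjTranspose, star_eq_conjTranspose,
    conjTranspose_conjTranspose]
  simp [Matrix.mul_assoc]

lemma sqrt_mul_self' {M : Matrix (Fin n) (Fin n) ℝ} (hM : M.PosSemidef) :
    hM.sqrt * hM.sqrt = M := by
  unfold Matrix.PosSemidef.sqrt
  have hU : (star hM.1.eigenvectorUnitary : Matrix (Fin n) (Fin n) ℝ) *
      hM.1.eigenvectorUnitary.1 = 1 := Unitary.coe_star_mul_self _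
  have hD : diagonal ((↑) ∘ (√·) ∘ hM.1.eigenvalues) *
      diagonal ((↑) ∘ (√·) ∘ hM.1.eigenvalues) =
      diagonal (RCLike.ofReal ∘ hM.1.eigenvalues : Fin n → ℝ) := by
    rw [diagonal_mul_diagonal]
    congr 1
    funext i
    simp [Real.mul_self_sqrt (hM.eigenvalues_nonneg i)]
  calc _ = hM.1.eigenvectorUnitary.1 * (diagonal ((↑) ∘ (√·) ∘ hM.1.eigenvalues) *
      ((star hM.1.eigenvectorUnitary : Matrix (Fin n) (Fin n) ℝ) *
      hM.1.eigenvectorUnitary.1) * diagonal ((↑) ∘ (√·) ∘ hM.1.eigenvalues)) *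
      (star hM.1.eigenvectorUnitary : Matrix (Fin n) (Fin n) ℝ) := by
        simp only [Matrix.mul_assoc]; rfl
    _ = M := by
        rw [hU, Matrix.mul_one, hD]
        conv_rhs => rw [hM.1.spectral_theorem]
        rw [Unitary.conjStarAlgAut_apply]

def spec (A : Matrix (Fin n) (Fin n) ℝ) : Set ℝ :=
  {r : ℝ | ∃ x : Fin n → ℝ, x ≠ 0 ∧ A.mulVec x = r • x}

lemma spec_finite (A : Matrix (Fin n) (Fin n) ℝ) : (spec A).Finite := by
  apply (Matrix.finite_spectrum (R := ℝ) A).subset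
  rintro r ⟨x, hx, hAx⟩
  rw [spectrum.mem_iff]
  intro hU
  have hdet : (algebraMap ℝ (Matrix (Fin n) (Fin n) ℝ) r - A).det = 0 := by
    rw [← Matrix.exists_mulVec_eq_zero_iff]
    refine ⟨x, hx, ?_⟩
    rw [Matrix.sub_mulVec, Algebra.algebraMap_eq_smul_one, Matrix.smul_mulVec,
      Matrix.one_mulVec, hAx, sub_self]
  rw [Matrix.isUnit_iff_isUnit_det, hdet] at hU
  exact (not_isUnit_zero hU)

lemma spec_nonempty (hn : 0 < n) {A : Matrix (Fin n) (Fin n) ℝ} (hA : A.IsHermitian) :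
    (spec A).Nonempty := by
  refine ⟨hA.eigenvalues ⟨0, hn⟩, ⇑(hA.eigenvectorBasis ⟨0, hn⟩), ?_,
    hA.mulVec_eigenvectorBasis ⟨0, hn⟩⟩
  have h := hA.eigenvectorBasis.orthonormal.ne_zero ⟨0, hn⟩
  intro h0
  exact h (by ext i; exact congrFun h0 i)

lemma spec_pos {A : Matrix (Fin n) (Fin n) ℝ} (hA : A.PosDef) {r : ℝ} (hr : r ∈ spec A) :
    0 < r := by
  obtain ⟨x, hx, hAx⟩ := hr
  have h1 := hA.dotProduct_mulVec_pos hx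
  rw [hAx] at h1
  have hxx : (0:ℝ) ≤ x ⬝ᵥ x := by
    rw [dotProduct]
    exact Finset.sum_nonneg fun i _ => mul_self_nonneg _
  simp only [star_trivial, dotProduct_smul, smul_eq_mul] at h1
  nlinarith

lemma spec_smul_add_one (A : Matrix (Fin n) (Fin n) ℝ) (c d : ℝ) (hc : c ≠ 0) :
    spec (c • A + d • (1 : Matrix (Fin n) (Fin n) ℝ)) = (fun t => c * t + d) '' spec A := by
  ext r
  constructor
  · rintro ⟨x, hx, hAx⟩
    have h1 : c • A.mulVec x + d • x = r • x := by
      simpa [Matrix.add_mulVec, Matrix.smul_mulVec, Matrix.one_mulVec] using hAx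
    have h2 : c • A.mulVec x = (r - d) • x := by
      rw [sub_smul, ← h1]; abel
    refine ⟨(r - d) / c, ⟨x, hx, ?_⟩, by field_simp; ring⟩
    calc A.mulVec x = c⁻¹ • (c • A.mulVec x) := by
          rw [smul_smul, inv_mul_cancel₀ hc, one_smul]
      _ = ((r - d) / c) • x := by rw [h2, smul_smul, div_eq_inv_mul]
  · rintro ⟨t, ⟨x, hx, hAx⟩, rfl⟩
    refine ⟨x, hx, ?_⟩
    simp [Matrix.add_mulVec, Matrix.smul_mulVec, Matrix.one_mulVec, hAx, smul_smul,
      add_smul]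

lemma spec_inv {A : Matrix (Fin n) (Fin n) ℝ} (hA : A.PosDef) :
    spec A⁻¹ = Inv.inv '' spec A := by
  have hu : IsUnit A.det := isUnit_iff_ne_zero.mpr hA.det_pos.ne'
  have hAiA : A⁻¹ * A = 1 := Matrix.nonsing_inv_mul A hu
  have hAAi : A * A⁻¹ = 1 := Matrix.mul_nonsing_inv A hu
  ext r
  constructor
  · rintro ⟨x, hx, hAx⟩
    have h1 : A *ᵥ (A⁻¹ *ᵥ x) = x := by
      rw [Matrix.mulVec_mulVec, hAAi, Matrix.one_mulVec]
    have hr0 : r ≠ 0 := by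
      rintro rfl
      rw [hAx] at h1
      apply hx
      simpa using h1.symm
    rw [hAx, Matrix.mulVec_smul] at h1
    refine ⟨r⁻¹, ⟨x, hx, ?_⟩, inv_inv r⟩
    calc A *ᵥ x = r⁻¹ • (r • (A *ᵥ x)) := by rw [smul_smul, inv_mul_cancel₀ hr0, one_smul]
      _ = r⁻¹ • x := by rw [h1]
  · rintro ⟨t, ⟨x, hx, hAx⟩, rfl⟩
    have ht : t ≠ 0 := (spec_pos hA ⟨x, hx, hAx⟩).ne'
    have h1 : A⁻¹ *ᵥ (A *ᵥ x) = x := by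
      rw [Matrix.mulVec_mulVec, hAiA, Matrix.one_mulVec]
    rw [hAx, Matrix.mulVec_smul] at h1
    refine ⟨x, hx, ?_⟩
    calc A⁻¹ *ᵥ x = t⁻¹ • (t • (A⁻¹ *ᵥ x)) := by rw [smul_smul, inv_mul_cancel₀ ht, one_smul]
      _ = t⁻¹ • x := by rw [h1]

lemma spec_one (hn : 0 < n) : spec (1 : Matrix (Fin n) (Fin n) ℝ) = {1} := by
  ext r
  simp only [spec, Set.mem_setOf_eq, Set.mem_singleton_iff]
  constructor
  · rintro ⟨x, hx, hAx⟩
    rw [Matrix.one_mulVec] at hAx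
    by_contra h
    apply hx
    have h0 : (1 - r) • x = 0 := by
      rw [sub_smul, one_smul]; exact sub_eq_zero_of_eq hAx
    rcases smul_eq_zero.mp h0 with h' | h'
    · exact absurd (by linarith [sub_eq_zero.mp h']) h
    · exact h'
  · rintro rfl
    refine ⟨fun _ => 1, ?_, by simp [Matrix.one_mulVec]⟩
    intro h
    have := congrFun h ⟨0, hn⟩
    simp at this

lemma lamMin_eq (A : Matrix (Fin n) (Fin n) ℝ) : lamMin A = sInf (spec A) := rfl
lemma lamMax_eq (A : Matrix (Fin n) (Fin n) ℝ) : lamMax A = sSup (spec A) := rfl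

lemma lamMax_mem (hn : 0 < n) {A : Matrix (Fin n) (Fin n) ℝ} (hA : A.IsHermitian) :
    lamMax A ∈ spec A :=
  Set.Nonempty.csSup_mem (spec_nonempty hn hA) (spec_finite A)

lemma le_lamMax {A : Matrix (Fin n) (Fin n) ℝ} {r : ℝ} (hr : r ∈ spec A) : r ≤ lamMax A :=
  le_csSup (spec_finite A).bddAbove hr

lemma lamMax_pos (hn : 0 < n) {A : Matrix (Fin n) (Fin n) ℝ} (hA : A.PosDef) :
    0 < lamMax A := spec_pos hA (lamMax_mem hn hA.isHermitian)

lemma lamMin_inv (hn : 0 < n) {A : Matrix (Fin n) (Fin n) ℝ} (hA : A.PosDef) :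
    lamMin A⁻¹ = (lamMax A)⁻¹ := by
  rw [lamMin_eq, spec_inv hA]
  apply IsLeast.csInf_eq
  refine ⟨⟨lamMax A, lamMax_mem hn hA.isHermitian, rfl⟩, ?_⟩
  rintro s ⟨t, ht, rfl⟩
  exact inv_anti₀ (spec_pos hA ht) (le_lamMax ht)

lemma lamMax_affine (hn : 0 < n) {A : Matrix (Fin n) (Fin n) ℝ} (hA : A.IsHermitian)
    {c : ℝ} (d : ℝ) (hc : 0 < c) :
    lamMax (c • A + d • (1 : Matrix (Fin n) (Fin n) ℝ)) = c * lamMax A + d := by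
  rw [lamMax_eq, spec_smul_add_one A c d hc.ne']
  apply IsGreatest.csSup_eq
  refine ⟨⟨lamMax A, lamMax_mem hn hA, rfl⟩, ?_⟩
  rintro s ⟨t, ht, rfl⟩
  have := le_lamMax ht
  simp only
  nlinarith

lemma lamMin_one (hn : 0 < n) : lamMin (1 : Matrix (Fin n) (Fin n) ℝ) = 1 := by
  rw [lamMin_eq, spec_one hn]; exact csInf_singleton 1

lemma posDef_smul {A : Matrix (Fin n) (Fin n) ℝ} (hA : A.PosDef) {c : ℝ} (hc : 0 < c) :
    (c • A).PosDef := by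
  refine Matrix.PosDef.of_dotProduct_mulVec_pos
    (by simpa [Matrix.IsHermitian] using congrArg (c • ·) hA.1) fun x hx => ?_
  have := hA.dotProduct_mulVec_pos hx
  simp only [Matrix.smul_mulVec, dotProduct_smul, smul_eq_mul]
  positivity

lemma posSemidef_smul {A : Matrix (Fin n) (Fin n) ℝ} (hA : A.PosSemidef) {c : ℝ} (hc : 0 ≤ c) :
    (c • A).PosSemidef := by
  refine Matrix.PosSemidef.of_dotProduct_mulVec_nonneg
    (by simpa [Matrix.IsHermitian] using congrArg (c • ·) hA.1) fun x => ?_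
  have := hA.dotProduct_mulVec_nonneg x
  simp only [Matrix.smul_mulVec, dotProduct_smul, smul_eq_mul]
  positivity

lemma posDef_conj {A B : Matrix (Fin n) (Fin n) ℝ} (hA : A.PosDef) (hB : B.IsHermitian)
    (hBu : IsUnit B.det) : (B * A * B).PosDef := by
  refine Matrix.PosDef.of_dotProduct_mulVec_pos ?_ fun x hx => ?_
  · unfold Matrix.IsHermitian
    rw [Matrix.conjTranspose_mul, Matrix.conjTranspose_mul, hA.1, hB, Matrix.mul_assoc]
  · have hBx : B *ᵥ x ≠ 0 := by
      intro h
      apply hx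
      have h2 : B⁻¹ *ᵥ (B *ᵥ x) = x := by
        rw [Matrix.mulVec_mulVec, Matrix.nonsing_inv_mul B hBu, Matrix.one_mulVec]
      rw [h] at h2
      simpa using h2.symm
    have h2 := hA.dotProduct_mulVec_pos hBx
    have key : star x ⬝ᵥ (B * A * B) *ᵥ x = star (B *ᵥ x) ⬝ᵥ A *ᵥ (B *ᵥ x) := by
      rw [Matrix.star_mulVec, ← Matrix.mulVec_mulVec, ← Matrix.mulVec_mulVec,
        dotProduct_mulVec (star x), hB.eq]
    rw [key]
    exact h2

lemma diag_entry_pos {M : Matrix (Fin n) (Fin n) ℝ} (hM : M.PosDef) (i : Fin n) :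
    0 < M i i := by
  have := hM.dotProduct_mulVec_pos (x := Pi.single i (1:ℝ)) (by
    intro h
    have := congrFun h i
    simp at this)
  simpa [Matrix.mulVec_single, single_dotProduct] using this

lemma count_supersets (T : Finset (Fin n)) (τ : ℕ) (hT : T.card ≤ τ) :
    (univ.filter fun S : Finset (Fin n) => S.card = τ ∧ T ⊆ S).card
      = (n - T.card).choose (τ - T.card) := by
  have hcard : (univ \ T).card = n - T.card := by
    rw [Finset.card_sdiff_of_subset (Finset.subset_univ T), Finset.card_univ, Fintype.card_fin]
  rw [← hcard, ← Finset.card_powersetCard (τ - T.card) (univ \ T)]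
  apply Finset.card_bij' (fun S _ => S \ T) (fun U _ => U ∪ T)
  · intro S hS
    simp only [Finset.mem_filter, Finset.mem_univ, true_and] at hS
    rw [Finset.mem_powersetCard]
    exact ⟨Finset.sdiff_subset_sdiff (Finset.subset_univ S) le_rfl,
      by rw [Finset.card_sdiff_of_subset hS.2, hS.1]⟩
  · intro U hU
    rw [Finset.mem_powersetCard] at hU
    have hdisj : Disjoint U T := Finset.disjoint_left.mpr fun a ha =>
      (Finset.mem_sdiff.mp (hU.1 ha)).2
    simp only [Finset.mem_filter, Finset.mem_univ, true_and]
    constructor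
    · rw [Finset.card_union_of_disjoint hdisj, hU.2]
      omega
    · exact Finset.subset_union_right
  · intro S hS
    simp only [Finset.mem_filter, Finset.mem_univ, true_and] at hS
    exact Finset.sdiff_union_of_subset hS.2
  · intro U hU
    rw [Finset.mem_powersetCard] at hU
    have hdisj : Disjoint U T := Finset.disjoint_left.mpr fun a ha =>
      (Finset.mem_sdiff.mp (hU.1 ha)).2
    exact Finset.union_sdiff_cancel_right hdisj

lemma choose_ratio (τ : ℕ) (hτ1 : 1 ≤ τ) (hτn : τ ≤ n) :
    ((n - 1).choose (τ - 1) : ℝ) / (n.choose τ) = τ / n := by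
  have h0 : 1 ≤ n := le_trans hτ1 hτn
  have key : n * (n - 1).choose (τ - 1) = n.choose τ * τ := by
    have h := Nat.add_one_mul_choose_eq (n - 1) (τ - 1)
    have h1 : n - 1 + 1 = n := Nat.succ_pred_eq_of_pos h0
    have h2 : τ - 1 + 1 = τ := Nat.succ_pred_eq_of_pos hτ1
    rw [h1, h2] at h
    exact h
  have hC : (0:ℝ) < n.choose τ := by exact_mod_cast Nat.choose_pos hτn
  have hn : (0:ℝ) < n := by exact_mod_cast h0
  have keyR : (n:ℝ) * (n - 1).choose (τ - 1) = n.choose τ * τ := by exact_mod_cast key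
  field_simp
  linarith [keyR]

lemma mexp_entry (M : Matrix (Fin n) (Fin n) ℝ) (τ : ℕ) (i j : Fin n) :
    mExp (tauNice n τ) (restr M) i j =
      ((univ.filter fun S : Finset (Fin n) => S.card = τ ∧ i ∈ S ∧ j ∈ S).card : ℝ)
        / (n.choose τ) * M i j := by
  have h : ∀ S : Finset (Fin n), (tauNice n τ S • restr M S) i j =
      if S.card = τ ∧ i ∈ S ∧ j ∈ S then 1 / (n.choose τ) * M i j else 0 := by
    intro S
    simp only [Matrix.smul_apply, restr, projMat, Matrix.mul_diagonal, Matrix.diagonal_mul,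
      tauNice, smul_eq_mul]
    split_ifs with h1 h2 h3 h4 h5 h6 h7 <;> simp_all
  rw [mExp, Matrix.sum_apply]
  simp only [h]
  rw [Finset.sum_ite, Finset.sum_const_zero, add_zero, Finset.sum_const, nsmul_eq_mul]
  ring

lemma mexp_eq (M : Matrix (Fin n) (Fin n) ℝ) (τ : ℕ) (hτ1 : 1 ≤ τ) (hτn : τ ≤ n)
    (hn : 2 ≤ n) :
    mExp (tauNice n τ) (restr M) = ((τ : ℝ) / n) •
      ((1 - ((τ : ℝ) - 1) / ((n : ℝ) - 1)) • Matrix.diagonal (fun i => M i i)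
        + (((τ : ℝ) - 1) / ((n : ℝ) - 1)) • M) := by
  have hn1R : ((n : ℝ) - 1) ≠ 0 := by
    have : (2:ℝ) ≤ n := by exact_mod_cast hn
    linarith
  have hnR : (n : ℝ) ≠ 0 := by
    have : (2:ℝ) ≤ n := by exact_mod_cast hn
    linarith
  ext i j
  rw [mexp_entry]
  rcases eq_or_ne i j with rfl | hij
  · have hfilter : (univ.filter fun S : Finset (Fin n) => S.card = τ ∧ i ∈ S ∧ i ∈ S)
        = (univ.filter fun S : Finset (Fin n) => S.card = τ ∧ {i} ⊆ S) := by
      apply Finset.filter_congr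
      intro S _
      simp [Finset.singleton_subset_iff, and_self]
    rw [hfilter, count_supersets _ τ (by simpa using hτ1), Finset.card_singleton]
    rw [choose_ratio τ hτ1 hτn]
    simp only [Matrix.smul_apply, Matrix.add_apply, Matrix.diagonal_apply_eq, smul_eq_mul]
    field_simp
    ring
  · rcases eq_or_lt_of_le hτ1 with rfl | hτ2
    · have hfilter : (univ.filter fun S : Finset (Fin n) => S.card = 1 ∧ i ∈ S ∧ j ∈ S) = ∅ := by
        apply Finset.filter_false_of_mem
        rintro S - ⟨hc, hiS, hjS⟩
        obtain ⟨k, rfl⟩ := Finset.card_eq_one.mp hc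
        rw [Finset.mem_singleton] at hiS hjS
        exact hij (hiS.trans hjS.symm)
      rw [hfilter]
      simp only [Finset.card_empty, Nat.cast_zero, zero_div, zero_mul, Matrix.smul_apply,
        Matrix.add_apply, Matrix.diagonal_apply_ne _ hij, smul_eq_mul]
      norm_num
    · have hfilter : (univ.filter fun S : Finset (Fin n) => S.card = τ ∧ i ∈ S ∧ j ∈ S)
          = (univ.filter fun S : Finset (Fin n) =>
              S.card = τ ∧ ({i, j} : Finset (Fin n)) ⊆ S) := by
        apply Finset.filter_congr
        intro S _
        simp [Finset.insert_subset_iff, Finset.singleton_subset_iff]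
      have hcard2 : ({i, j} : Finset (Fin n)).card = 2 := Finset.card_pair hij
      rw [hfilter, count_supersets _ τ (by omega), hcard2]
      have key : ((n - 2).choose (τ - 2) : ℝ) / (n.choose τ)
          = ((τ:ℝ) / n) * (((τ:ℝ) - 1) / ((n:ℝ) - 1)) := by
        have h1 : ((n - 1 - 1).choose (τ - 1 - 1) : ℝ) / ((n-1).choose (τ-1)) =
            ((τ:ℝ) - 1) / ((n:ℝ) - 1) := by
          have h := choose_ratio (n := n - 1) (τ - 1) (by omega) (by omega)
          rw [h]
          congr 1 <;>
            push_cast [Nat.cast_sub (by omega : 1 ≤ τ), Nat.cast_sub (by omega : 1 ≤ n)] <;> ring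
        have h2 : ((n - 1).choose (τ - 1) : ℝ) / (n.choose τ) = (τ:ℝ) / n :=
          choose_ratio τ hτ1 hτn
        have e1 : n - 1 - 1 = n - 2 := by omega
        have e2 : τ - 1 - 1 = τ - 2 := by omega
        rw [e1, e2] at h1
        have hCn : ((n.choose τ : ℝ)) ≠ 0 := by
          exact_mod_cast (Nat.choose_pos hτn).ne'
        have hCn1 : (((n-1).choose (τ-1) : ℝ)) ≠ 0 := by
          exact_mod_cast (Nat.choose_pos (by omega : τ - 1 ≤ n - 1)).ne'
        calc ((n - 2).choose (τ - 2) : ℝ) / (n.choose τ)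
            = (((n - 2).choose (τ - 2) : ℝ) / ((n-1).choose (τ-1)))
              * (((n - 1).choose (τ - 1) : ℝ) / (n.choose τ)) := by field_simp
          _ = (((τ:ℝ) - 1) / ((n:ℝ) - 1)) * ((τ:ℝ) / n) := by rw [h1, h2]
          _ = ((τ:ℝ) / n) * (((τ:ℝ) - 1) / ((n:ℝ) - 1)) := by ring
      rw [key]
      simp only [Matrix.smul_apply, Matrix.add_apply, Matrix.diagonal_apply_ne _ hij,
        smul_eq_mul]
      ring

end Spec18

open Spec18

theorem stmt_18 {n : ℕ} (hn : 2 ≤ n) (M : Matrix (Fin n) (Fin n) ℝ) (hM : M.PosDef)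
    (τ : ℕ) (hτ1 : 1 ≤ τ) (hτn : τ ≤ n)
    (β : ℝ) (hβ1 : 1 ≤ β) (hβτ : β ≤ τ)
    (hESO : ((((τ : ℝ) / n) * β) • Matrix.diagonal (fun i => M i i) -
      mExp (tauNice n τ) (restr M)).PosSemidef)
    (σ₂ σ₃ : ℝ)
    (hσ₂ : σ₂ = ((τ : ℝ) ^ 2 / (n : ℝ) ^ 2) *
      lamMin (hM.posSemidef.sqrt * (mExp (tauNice n τ) (restr M))⁻¹ * hM.posSemidef.sqrt))
    (hσ₃ : σ₃ = ((τ : ℝ) / n) * β⁻¹ *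
      lamMin (hM.posSemidef.sqrt * (Matrix.diagonal (fun i => M i i))⁻¹ * hM.posSemidef.sqrt)) :
    σ₂ = β * σ₃ /
      ((1 - ((τ : ℝ) - 1) / ((n : ℝ) - 1)) +
        ((n : ℝ) / τ) * (((τ : ℝ) - 1) / ((n : ℝ) - 1)) * β * σ₃) := by
  classical
  have hn0 : 0 < n := by omega
  have hnR : (0:ℝ) < n := by exact_mod_cast hn0
  have hn1R : (0:ℝ) < (n:ℝ) - 1 := by
    have : (2:ℝ) ≤ n := by exact_mod_cast hn
    linarith
  have hτR : (0:ℝ) < τ := by exact_mod_cast hτ1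
  have hβ0 : (0:ℝ) < β := lt_of_lt_of_le one_pos hβ1
  set α : ℝ := ((τ : ℝ) - 1) / ((n : ℝ) - 1) with hα
  have hα0 : 0 ≤ α := by
    apply div_nonneg _ hn1R.le
    have : (1:ℝ) ≤ τ := by exact_mod_cast hτ1
    linarith
  set R := hM.posSemidef.sqrt with hRdef
  have hRH : R.IsHermitian := sqrt_isHermitian' hM.posSemidef
  have hRR : R * R = M := sqrt_mul_self' hM.posSemidef
  have hRu : IsUnit R.det := by
    rw [isUnit_iff_ne_zero]
    intro h0
    have : M.det = 0 := by rw [← hRR, Matrix.det_mul, h0, mul_zero]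
    exact hM.det_pos.ne' this
  have hRiu : IsUnit R⁻¹.det := Matrix.isUnit_nonsing_inv_det R hRu
  have hRinvH : (R⁻¹).IsHermitian := by
    unfold Matrix.IsHermitian
    rw [Matrix.conjTranspose_nonsing_inv, hRH.eq]
  set D := Matrix.diagonal (fun i => M i i) with hDdef
  have hD : D.PosDef := Matrix.posDef_diagonal_iff.mpr fun i => diag_entry_pos hM i
  set A' := R⁻¹ * D * R⁻¹ with hA'def
  have hA' : A'.PosDef := posDef_conj hD hRinvH hRiu
  set L := lamMax A' with hLdef
  have hL : 0 < L := lamMax_pos hn0 hA'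
  have hB' : A'⁻¹ = R * D⁻¹ * R := by
    rw [hA'def, Matrix.mul_inv_rev, Matrix.mul_inv_rev,
      Matrix.nonsing_inv_nonsing_inv R hRu, ← Matrix.mul_assoc]
  have hσ₃' : σ₃ = ((τ : ℝ) / n) * β⁻¹ * L⁻¹ := by
    rw [hσ₃, ← hB', lamMin_inv hn0 hA']
  have hRinvMRinv : R⁻¹ * M * R⁻¹ = 1 := by
    rw [← hRR, ← Matrix.mul_assoc, Matrix.nonsing_inv_mul R hRu,
      Matrix.one_mul, Matrix.mul_nonsing_inv R hRu]
  have hcomb := Spec18.mexp_eq M τ hτ1 hτn hn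
  rcases lt_or_eq_of_le hτn with hτlt | hτeq
  · -- case τ < n
    have hα1 : α < 1 := by
      rw [hα, div_lt_one hn1R]
      have : (τ:ℝ) < n := by exact_mod_cast hτlt
      linarith
    set c : ℝ := ((τ : ℝ) / n) * (1 - α) with hcdef
    set d : ℝ := ((τ : ℝ) / n) * α with hddef
    have hc : 0 < c := by
      apply mul_pos (div_pos hτR hnR)
      linarith
    have hd : 0 ≤ d := mul_nonneg (div_pos hτR hnR).le hα0
    have hF : ((1 - α) • D + α • M).PosDef :=
      Matrix.PosDef.add_posSemidef (posDef_smul hD (by linarith))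
        (posSemidef_smul hM.posSemidef hα0)
    have hE : (mExp (tauNice n τ) (restr M)).PosDef := by
      rw [hcomb]
      exact posDef_smul hF (div_pos hτR hnR)
    have hG : R⁻¹ * mExp (tauNice n τ) (restr M) * R⁻¹
        = c • A' + d • (1 : Matrix (Fin n) (Fin n) ℝ) := by
      rw [hcomb]
      simp only [Matrix.mul_smul, Matrix.smul_mul, Matrix.mul_add, Matrix.add_mul, smul_add,
        smul_smul]
      rw [hRinvMRinv, hcdef, hddef, hA'def]
    have hGpos : (c • A' + d • (1 : Matrix (Fin n) (Fin n) ℝ)).PosDef := by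
      have := posDef_conj hE hRinvH hRiu
      rwa [hG] at this
    have hC : R * (mExp (tauNice n τ) (restr M))⁻¹ * R
        = (c • A' + d • (1 : Matrix (Fin n) (Fin n) ℝ))⁻¹ := by
      rw [← hG, Matrix.mul_inv_rev, Matrix.mul_inv_rev,
        Matrix.nonsing_inv_nonsing_inv R hRu, ← Matrix.mul_assoc]
    have hσ₂' : σ₂ = ((τ : ℝ) ^ 2 / (n : ℝ) ^ 2) * (c * L + d)⁻¹ := by
      rw [hσ₂, hC, lamMin_inv hn0 hGpos, lamMax_affine hn0 hA'.isHermitian d hc]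
    rw [hσ₂', hσ₃']
    have hLne : L ≠ 0 := hL.ne'
    have hnne : (n : ℝ) ≠ 0 := hnR.ne'
    have hτne : (τ : ℝ) ≠ 0 := hτR.ne'
    have hβne : β ≠ 0 := hβ0.ne'
    set K : ℝ := (1 - α) * L + α with hKdef
    have hK : 0 < K := by nlinarith
    have hKne : K ≠ 0 := hK.ne'
    have e1 : c * L + d = ((τ : ℝ) / n) * K := by rw [hcdef, hddef, hKdef]; ring
    have e2 : β * (((τ : ℝ) / n) * β⁻¹ * L⁻¹) = ((τ : ℝ) / n) * L⁻¹ := by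
      field_simp
    have e3 : (1 - α) + ((n : ℝ) / τ) * α * β * (((τ : ℝ) / n) * β⁻¹ * L⁻¹) = K * L⁻¹ := by
      rw [hKdef]
      field_simp
    rw [e1, e2, e3]
    field_simp
  · -- case τ = n
    subst hτeq
    have hα1 : α = 1 := by rw [hα]; field_simp
    have hτn1 : (τ : ℝ) / (τ : ℝ) = 1 := div_self hτR.ne'
    have h11 : ((τ : ℝ) - 1) / ((τ : ℝ) - 1) = 1 := div_self hn1R.ne'
    have hEM : mExp (tauNice τ τ) (restr M) = M := by
      rw [hcomb, h11, hτn1]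
      norm_num
    have hC1 : R * M⁻¹ * R = 1 := by
      rw [← hRR, Matrix.mul_inv_rev]
      rw [← Matrix.mul_assoc R R⁻¹ R⁻¹, Matrix.mul_nonsing_inv R hRu, Matrix.one_mul,
        Matrix.nonsing_inv_mul R hRu]
    have hs2 : σ₂ = 1 := by
      rw [hσ₂, hEM, hC1, lamMin_one hn0, mul_one, div_self (pow_ne_zero 2 hτR.ne')]
    have hs3 : σ₃ = β⁻¹ * L⁻¹ := by rw [hσ₃', hτn1, one_mul]
    have e4 : β * (β⁻¹ * L⁻¹) = L⁻¹ := by field_simp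
    rw [hs2, hs3, hα1, hτn1, e4]
    rw [sub_self, zero_add, one_mul, one_mul, e4, div_self (inv_ne_zero hL.ne')]
end
end
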